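/- arXiv:1203.6531 — 2 statements merged into one kernel-verified Lean document; each statement's English description precedes it below -/
import Mathlib

section
/- In the affine Weyl group Ã_n, for 1 ≤ l < k−1 < n the identity r_0 (r_n ⋯ r_k)(r_1 ⋯ r_l) r_0 (r_n ⋯ r_k) = r_1 r_0 (r_n ⋯ r_k)(r_1 ⋯ r_l) r_0 (r_n ⋯ r_{k+1}) holds. -/
/-- The ascending product `r_a r_{a+1} ⋯ r_b` (the identity when `b < a`). -/
def ascProd {G : Type*} [Monoid G] (r : ℕ → G) (a b : ℕ) : G :=
  ((List.range' a (b + 1 - a)).map r).prod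

/-- The descending product `r_a r_{a-1} ⋯ r_b` (the identity when `a < b`). -/
def descProd {G : Type*} [Monoid G] (r : ℕ → G) (a b : ℕ) : G :=
  ((List.range' b (a + 1 - b)).reverse.map r).prod

lemma descProd_comm {G : Type*} [Monoid G] (r : ℕ → G) (c : G) (a b : ℕ)
    (h : ∀ i, b ≤ i → i ≤ a → Commute c (r i)) : Commute c (descProd r a b) := by
  apply Commute.list_prod_right
  intro x hx
  rw [List.mem_map] at hx
  obtain ⟨i, hi, rfl⟩ := hx
  rw [List.mem_reverse, List.mem_range'_1] at hi
  exact h i hi.1 (by omega)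

lemma ascProd_comm {G : Type*} [Monoid G] (r : ℕ → G) (c : G) (a b : ℕ)
    (h : ∀ i, a ≤ i → i ≤ b → Commute c (r i)) : Commute c (ascProd r a b) := by
  apply Commute.list_prod_right
  intro x hx
  rw [List.mem_map] at hx
  obtain ⟨i, hi, rfl⟩ := hx
  rw [List.mem_range'_1] at hi
  exact h i hi.1 (by omega)

lemma descProd_bot {G : Type*} [Monoid G] (r : ℕ → G) (a b : ℕ) (h : b ≤ a) :
    descProd r a b = descProd r a (b + 1) * r b := by
  unfold descProd
  have h1 : a + 1 - b = (a + 1 - (b + 1)) + 1 := by omega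
  rw [h1, List.range'_succ]
  simp

lemma ascProd_bot {G : Type*} [Monoid G] (r : ℕ → G) (a b : ℕ) (h : a ≤ b) :
    ascProd r a b = r a * ascProd r (a + 1) b := by
  unfold ascProd
  have h1 : b + 1 - a = (b + 1 - (a + 1)) + 1 := by omega
  rw [h1, List.range'_succ]
  simp

lemma descProd_self {G : Type*} [Monoid G] (r : ℕ → G) (a : ℕ) : descProd r a a = r a := by
  unfold descProd
  have h1 : a + 1 - a = 1 := by omega
  rw [h1]
  simp

lemma descProd_empty {G : Type*} [Monoid G] (r : ℕ → G) (a : ℕ) : descProd r a (a + 1) = 1 := by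
  unfold descProd
  have h1 : a + 1 - (a + 1) = 0 := by omega
  rw [h1]
  simp

lemma swap_aux {G : Type*} [Monoid G] {a b : G} (h : a * b = b * a) (x : G) :
    a * (b * x) = b * (a * x) := by
  rw [← mul_assoc, h, mul_assoc]

/-- Key lemma: for `2 ≤ k ≤ n`,
`(r_n ⋯ r_k) r_0 (r_n ⋯ r_k) = r_0 (r_n ⋯ r_k) r_0 (r_n ⋯ r_{k+1})`. -/
lemma affine_key {G : Type*} [Group G] (n : ℕ) (r : ℕ → G)
    (h2 : ∀ i j, i + 1 < j → j ≤ n → ¬(i = 0 ∧ j = n) → r i * r j = r j * r i)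
    (h3 : ∀ i < n, r i * r (i + 1) * r i = r (i + 1) * r i * r (i + 1))
    (h4 : r 0 * r n * r 0 = r n * r 0 * r n) :
    ∀ m k, 2 ≤ k → k ≤ n → n - k ≤ m →
      descProd r n k * r 0 * descProd r n k
        = r 0 * descProd r n k * r 0 * descProd r n (k + 1) := by
  intro m
  induction m with
  | zero =>
    intro k hk2 hkn hm
    have hk : k = n := by omega
    subst hk
    rw [descProd_self, descProd_empty, mul_one, h4]
  | succ m ih =>
    intro k hk2 hkn hm
    rcases eq_or_lt_of_le hkn with h | h
    · subst h
      rw [descProd_self, descProd_empty, mul_one, h4]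
    · have hk1n : k + 1 ≤ n := h
      have IH := ih (k + 1) (by omega) hk1n (by omega)
      have hD : descProd r n k = descProd r n (k + 1) * r k := descProd_bot r n k hkn
      have hEE : descProd r n (k + 1) = descProd r n (k + 2) * r (k + 1) :=
        descProd_bot r n (k + 1) hk1n
      set E := descProd r n (k + 1) with hE
      set E' := descProd r n (k + 2) with hE'
      have c0k : r 0 * r k = r k * r 0 :=
        h2 0 k (by omega) (by omega) (fun ⟨_, hh⟩ => by omega)
      have ckE' : r k * E' = E' * r k := by
        have : Commute (r k) E' := descProd_comm r (r k) n (k + 2)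
          (fun i hi1 hi2 => h2 k i (by omega) hi2 (fun ⟨hh, _⟩ => by omega))
        exact this
      have braid : r k * r (k + 1) * r k = r (k + 1) * r k * r (k + 1) := h3 k h
      rw [hD]
      -- Goal: E * r k * r 0 * (E * r k) = r 0 * (E * r k) * r 0 * E
      simp only [mul_assoc]
      -- LHS: E * (r k * (r 0 * (E * r k)))
      rw [swap_aux c0k.symm (E * r k)]
      -- E * (r 0 * (r k * (E * r k)))
      have inner : r k * (E * r k) = E * (r k * r (k + 1)) := by
        rw [hEE]
        simp only [mul_assoc]
        rw [swap_aux ckE' (r (k + 1) * r k)]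
        congr 1
        simp only [← mul_assoc]
        rw [braid]
      rw [inner]
      -- E * (r 0 * (E * (r k * r (k+1)))) = r 0 * (E * (r k * (r 0 * E)))
      have IH' : ∀ x : G, E * (r 0 * (E * x)) = r 0 * (E * (r 0 * (E' * x))) := by
        intro x
        have := congrArg (· * x) IH
        simpa only [mul_assoc] using this
      rw [IH' (r k * r (k + 1))]
      rw [show E' * (r k * r (k + 1)) = r k * (E' * r (k + 1)) from (swap_aux ckE'.symm _)]
      rw [← hEE]
      rw [swap_aux c0k E]

/-- In Ã_n, for 1 ≤ l < k−1 < n: r_0 (r_n ⋯ r_k)(r_1 ⋯ r_l) r_0 (r_n ⋯ r_k) = r_1 r_0 (r_n ⋯ r_k)(r_1 ⋯ r_l) r_0 (r_n ⋯ r_{k+1}). -/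
theorem affine_g7 (n : ℕ) (hn : 2 ≤ n) {G : Type*} [Group G] (r : ℕ → G)
    (h1 : ∀ i ≤ n, r i * r i = 1)
    (h2 : ∀ i j, i + 1 < j → j ≤ n → ¬(i = 0 ∧ j = n) → r i * r j = r j * r i)
    (h3 : ∀ i < n, r i * r (i + 1) * r i = r (i + 1) * r i * r (i + 1))
    (h4 : r 0 * r n * r 0 = r n * r 0 * r n)
    (k l : ℕ) (hl1 : 1 ≤ l) (hlk : l < k - 1) (hkn : k - 1 < n) :
    r 0 * descProd r n k * ascProd r 1 l * r 0 * descProd r n k =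
      r 1 * (r 0 * descProd r n k * ascProd r 1 l * r 0 * descProd r n (k + 1)) := by
  have hk3 : 3 ≤ k := by omega
  have hkn' : k ≤ n := by omega
  have hn3 : 3 ≤ n := by omega
  have hln : l ≤ n - 2 := by omega
  have key := affine_key n r h2 h3 h4 (n - k) k (by omega) hkn' le_rfl
  have hA : ascProd r 1 l = r 1 * ascProd r 2 l := ascProd_bot r 1 l hl1
  set D := descProd r n k with hD
  set D' := descProd r n (k + 1) with hD'
  set A₂ := ascProd r 2 l with hA₂
  -- commutation facts
  have c1D : r 1 * D = D * r 1 :=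
    descProd_comm r (r 1) n k (fun i hi1 hi2 =>
      h2 1 i (by omega) hi2 (fun ⟨hh, _⟩ => by omega))
  have cA0 : r 0 * A₂ = A₂ * r 0 :=
    ascProd_comm r (r 0) 2 l (fun i hi1 hi2 =>
      h2 0 i (by omega) (by omega) (fun ⟨_, hh⟩ => by omega))
  have cAD : ∀ b, k ≤ b → Commute A₂ (descProd r n b) := by
    intro b hb
    have : Commute (descProd r n b) A₂ := by
      apply ascProd_comm
      intro i hi1 hi2
      exact (descProd_comm r (r i) n b (fun j hj1 hj2 =>
        h2 i j (by omega) hj2 (fun ⟨hh, _⟩ => by omega))).symm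
    exact this.symm
  have cAD1 : A₂ * D = D * A₂ := cAD k le_rfl
  have cAD2 : A₂ * D' = D' * A₂ := cAD (k + 1) (by omega)
  have braid01 : r 0 * r 1 * r 0 = r 1 * r 0 * r 1 := h3 0 (by omega)
  rw [hA]
  simp only [mul_assoc]
  -- LHS: r 0 * (D * (r 1 * (A₂ * (r 0 * D))))
  -- RHS: r 1 * (r 0 * (D * (r 1 * (A₂ * (r 0 * D')))))
  rw [swap_aux c1D.symm (A₂ * (r 0 * D))]
  rw [swap_aux c1D.symm (A₂ * (r 0 * D'))]
  rw [swap_aux cA0.symm D, swap_aux cA0.symm D']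
  rw [show A₂ * D = D * A₂ from cAD1, show A₂ * D' = D' * A₂ from cAD2]
  -- LHS: r 0 * (r 1 * (D * (r 0 * (D * A₂))))
  -- RHS: r 1 * (r 0 * (r 1 * (D * (r 0 * (D' * A₂)))))
  have key' : ∀ x : G, D * (r 0 * (D * x)) = r 0 * (D * (r 0 * (D' * x))) := by
    intro x
    have := congrArg (· * x) key
    simpa only [mul_assoc] using this
  rw [key' A₂]
  -- RHS braid: r 1 * (r 0 * (r 1 * x)) = r 0 * (r 1 * (r 0 * x))
  have braid' : ∀ x : G, r 1 * (r 0 * (r 1 * x)) = r 0 * (r 1 * (r 0 * x)) := by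
    intro x
    have := congrArg (· * x) braid01.symm
    simpa only [mul_assoc] using this
  rw [braid' (D * (r 0 * (D' * A₂)))]
end

section
/- In the affine Weyl group Ã_n, for 2 ≤ k ≤ n−1, k+1 ≤ j ≤ n, and 1 ≤ l ≤ j−2, the identity r_0 (r_n ⋯ r_k)(r_1 ⋯ r_l) r_0 (r_n ⋯ r_j)(r_1 ⋯ r_l) = r_n r_0 (r_n ⋯ r_k)(r_1 ⋯ r_l) r_0 (r_n ⋯ r_j)(r_1 ⋯ r_{l−1}) holds. -/
section Helpers
variable {G : Type*} [Group G] (r : ℕ → G)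

lemma ascProd_empty (a b : ℕ) (h : b < a) : ascProd r a b = 1 := by
  unfold ascProd
  rw [show b + 1 - a = 0 by omega]
  simp

lemma descProd_empty_s10 (a b : ℕ) (h : a < b) : descProd r a b = 1 := by
  unfold descProd
  rw [show a + 1 - b = 0 by omega]
  simp

lemma ascProd_single (a : ℕ) : ascProd r a a = r a := by
  unfold ascProd
  rw [show a + 1 - a = 1 by omega]
  simp

lemma descProd_single (a : ℕ) : descProd r a a = r a := by
  unfold descProd
  rw [show a + 1 - a = 1 by omega]
  simp

lemma ascProd_last (a b : ℕ) (h : a ≤ b + 1) :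
    ascProd r a (b + 1) = ascProd r a b * r (b + 1) := by
  unfold ascProd
  rw [show b + 1 + 1 - a = (b + 1 - a) + 1 by omega, List.range'_concat,
    show a + 1 * (b + 1 - a) = b + 1 by omega]
  simp

lemma ascProd_head (a b : ℕ) (h : a ≤ b) :
    ascProd r a b = r a * ascProd r (a + 1) b := by
  unfold ascProd
  rw [show b + 1 - a = (b + 1 - (a + 1)) + 1 by omega, List.range'_succ]
  simp

lemma descProd_head (a b : ℕ) (hba : b ≤ a) (hb : 1 ≤ a) :
    descProd r a b = r a * descProd r (a - 1) b := by
  unfold descProd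
  rw [show a + 1 - b = (a - 1 + 1 - b) + 1 by omega, List.range'_concat,
    show b + 1 * (a - 1 + 1 - b) = a by omega]
  simp

lemma descProd_last (a b : ℕ) (h : b ≤ a) :
    descProd r a b = descProd r a (b + 1) * r b := by
  unfold descProd
  rw [show a + 1 - b = (a + 1 - (b + 1)) + 1 by omega, List.range'_succ]
  simp

lemma prod_rev_cancel (L : List ℕ) (h : ∀ i ∈ L, r i * r i = 1) :
    (L.map r).prod * ((L.reverse).map r).prod = 1 := by
  induction L with
  | nil => simp
  | cons x L ih =>
    simp only [List.map_cons, List.prod_cons, List.reverse_cons, List.map_append,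
      List.prod_append, List.map_nil, List.prod_nil, List.map_cons, List.prod_cons, mul_one]
    have hx := h x (by simp)
    have ih' := ih (fun i hi => h i (by simp [hi]))
    calc r x * (L.map r).prod * ((L.reverse.map r).prod * r x)
        = r x * ((L.map r).prod * (L.reverse.map r).prod) * r x := by group
      _ = r x * r x := by rw [ih']; group
      _ = 1 := hx

lemma asc_desc_cancel (a b : ℕ) (h : ∀ i, a ≤ i → i ≤ b → r i * r i = 1) :
    ascProd r a b * descProd r b a = 1 := by
  unfold ascProd descProd
  exact prod_rev_cancel r _ (fun i hi => by
    rw [List.mem_range'_1] at hi; exact h i hi.1 (by omega))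

lemma commute_ascProd (x : G) (a b : ℕ) (h : ∀ i, a ≤ i → i ≤ b → Commute x (r i)) :
    Commute x (ascProd r a b) := by
  unfold ascProd
  refine Commute.list_prod_right _ _ (fun y hy => ?_)
  obtain ⟨i, hi, rfl⟩ := List.mem_map.mp hy
  rw [List.mem_range'_1] at hi
  exact h i hi.1 (by omega)

lemma commute_descProd (x : G) (a b : ℕ) (h : ∀ i, b ≤ i → i ≤ a → Commute x (r i)) :
    Commute x (descProd r a b) := by
  unfold descProd
  refine Commute.list_prod_right _ _ (fun y hy => ?_)
  obtain ⟨i, hi, rfl⟩ := List.mem_map.mp hy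
  rw [List.mem_reverse, List.mem_range'_1] at hi
  exact h i hi.1 (by omega)

end Helpers

lemma asc_conj {G : Type*} [Group G] (r : ℕ → G) (n : ℕ)
    (h1 : ∀ i ≤ n, r i * r i = 1)
    (h2 : ∀ i j, i + 1 < j → j ≤ n → ¬(i = 0 ∧ j = n) → r i * r j = r j * r i)
    (h3 : ∀ i < n, r i * r (i + 1) * r i = r (i + 1) * r i * r (i + 1)) :
    ∀ l, 1 ≤ l → l ≤ n →
      ascProd r 1 (l - 1) * r l = (descProd r l 1 * ascProd r 2 l) * ascProd r 1 (l - 1) := by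
  intro l
  induction l with
  | zero => omega
  | succ m ih =>
    intro _ hln
    rcases Nat.eq_zero_or_pos m with rfl | hm
    · simp [ascProd_empty r 1 0 (by omega), ascProd_empty r 2 1 (by omega),
        descProd_single]
    · have ihm := ih hm (by omega)
      have hA' : ascProd r 1 (m + 1 - 1) = ascProd r 1 (m - 1) * r m := by
        rw [show m + 1 - 1 = (m - 1) + 1 by omega]
        rw [ascProd_last r 1 (m - 1) (by omega), show m - 1 + 1 = m by omega]
      have hD : descProd r (m + 1) 1 = r (m + 1) * descProd r m 1 := by
        rw [descProd_head r (m + 1) 1 (by omega) (by omega)]; simp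
      have hA2 : ascProd r 2 (m + 1) = ascProd r 2 m * r (m + 1) := by
        rcases Nat.lt_or_ge m 2 with h | h
        · interval_cases m
          · rw [ascProd_empty r 2 1 (by omega)]; simp [ascProd_single]
        · exact ascProd_last r 2 m (by omega)
      have hc : Commute (r (m + 1)) (ascProd r 1 (m - 1)) :=
        commute_ascProd r _ 1 (m - 1) (fun i hi1 hi2 =>
          (h2 i (m + 1) (by omega) (by omega) (by omega)).symm)
      rw [hA', hD, hA2]
      set D := descProd r m 1
      set A2 := ascProd r 2 m
      set A' := ascProd r 1 (m - 1)
      have braid := h3 m (by omega)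
      have sq := h1 (m + 1) (by omega)
      symm
      calc ((r (m + 1) * D) * (A2 * r (m + 1))) * (A' * r m)
          = r (m + 1) * ((D * A2) * ((r (m + 1) * A') * r m)) := by group
        _ = r (m + 1) * ((D * A2) * ((A' * r (m + 1)) * r m)) := by rw [hc.eq]
        _ = r (m + 1) * (((D * A2) * A') * (r (m + 1) * r m)) := by group
        _ = r (m + 1) * ((A' * r m) * (r (m + 1) * r m)) := by rw [← ihm]
        _ = r (m + 1) * (A' * ((r m * r (m + 1) * r m))) := by group
        _ = r (m + 1) * (A' * ((r (m + 1) * r m * r (m + 1)))) := by rw [braid]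
        _ = (r (m + 1) * A') * (r (m + 1) * (r m * r (m + 1))) := by group
        _ = (A' * r (m + 1)) * (r (m + 1) * (r m * r (m + 1))) := by rw [hc.eq]
        _ = A' * ((r (m + 1) * r (m + 1)) * (r m * r (m + 1))) := by group
        _ = A' * (1 * (r m * r (m + 1))) := by rw [sq]
        _ = A' * r m * r (m + 1) := by group

/-- In Ã_n, for 2 ≤ k ≤ n−1, k+1 ≤ j ≤ n, 1 ≤ l ≤ j−2: r_0 (r_n ⋯ r_k)(r_1 ⋯ r_l) r_0 (r_n ⋯ r_j)(r_1 ⋯ r_l) = r_n r_0 (r_n ⋯ r_k)(r_1 ⋯ r_l) r_0 (r_n ⋯ r_j)(r_1 ⋯ r_{l−1}). -/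
theorem affine_g9 (n : ℕ) (hn : 2 ≤ n) {G : Type*} [Group G] (r : ℕ → G)
    (h1 : ∀ i ≤ n, r i * r i = 1)
    (h2 : ∀ i j, i + 1 < j → j ≤ n → ¬(i = 0 ∧ j = n) → r i * r j = r j * r i)
    (h3 : ∀ i < n, r i * r (i + 1) * r i = r (i + 1) * r i * r (i + 1))
    (h4 : r 0 * r n * r 0 = r n * r 0 * r n)
    (k j l : ℕ) (hk2 : 2 ≤ k) (hkn : k ≤ n - 1) (hkj : k + 1 ≤ j) (hjn : j ≤ n)
    (hl1 : 1 ≤ l) (hlj : l ≤ j - 2) :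
    r 0 * descProd r n k * ascProd r 1 l * r 0 * descProd r n j * ascProd r 1 l =
      r n * (r 0 * descProd r n k * ascProd r 1 l * r 0 * descProd r n j * ascProd r 1 (l - 1)) := by
  have hjk3 : 3 ≤ j := by omega
  have hln : l ≤ n - 2 := by omega
  -- basic splittings
  have f1 : ascProd r 1 l = ascProd r 1 (l - 1) * r l := by
    have := ascProd_last r 1 (l - 1) (by omega)
    rwa [show l - 1 + 1 = l by omega] at this
  have f2 := asc_conj r n h1 h2 h3 l hl1 (by omega)
  have f7 : ascProd r 1 l = r 1 * ascProd r 2 l := by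
    have := ascProd_head r 1 l hl1
    norm_num at this
    exact this
  have hDL1 : descProd r l 1 = descProd r l 2 * r 1 := descProd_last r l 1 hl1
  have hDk : descProd r n k = r n * descProd r (n - 1) k :=
    descProd_head r n k (by omega) (by omega)
  have hcan : ascProd r 2 l * descProd r l 2 = 1 :=
    asc_desc_cancel r 2 l (fun i _ hi => h1 i (by omega))
  -- commutation facts
  have key : ∀ i, 1 ≤ i → i ≤ l → Commute (r i) (descProd r n j) := fun i hi1 hil =>
    commute_descProd r (r i) n j (fun m hm1 hm2 =>
      (h2 i m (by omega) (by omega) (by omega)))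
  have hDjDL : Commute (descProd r n j) (descProd r l 1) :=
    commute_descProd r _ l 1 (fun i hi1 hil => (key i hi1 hil).symm)
  have hDjA2 : Commute (descProd r n j) (ascProd r 2 l) :=
    commute_ascProd r _ 2 l (fun i hi1 hil => (key i (by omega) hil).symm)
  have hTDj : Commute (descProd r n j) (descProd r l 1 * ascProd r 2 l) :=
    hDjDL.mul_right hDjA2
  have hA2Dj : Commute (ascProd r 2 l) (descProd r n j) := hDjA2.symm
  have hc0D2 : Commute (r 0) (descProd r l 2) :=
    commute_descProd r (r 0) l 2 (fun i hi2 hil =>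
      h2 0 i (by omega) (by omega) (by omega))
  have hc0A2 : Commute (r 0) (ascProd r 2 l) :=
    commute_ascProd r (r 0) 2 l (fun i hi2 hil =>
      h2 0 i (by omega) (by omega) (by omega))
  have hc0D' : Commute (r 0) (descProd r (n - 1) k) :=
    commute_descProd r (r 0) (n - 1) k (fun i hik hi =>
      h2 0 i (by omega) (by omega) (by omega))
  -- key step K : A_l * r_0 * (r_l ⋯ r_1)(r_2 ⋯ r_l) = r_1 * r_0 * A_l
  have f4 : ascProd r 1 l * (r 0 * (descProd r l 1 * ascProd r 2 l)) =
      r 1 * (r 0 * ascProd r 1 l) := by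
    calc ascProd r 1 l * (r 0 * (descProd r l 1 * ascProd r 2 l))
        = (r 1 * ascProd r 2 l) *
            ((r 0 * descProd r l 2) * (r 1 * ascProd r 2 l)) := by rw [f7, hDL1]; group
      _ = (r 1 * ascProd r 2 l) *
            ((descProd r l 2 * r 0) * (r 1 * ascProd r 2 l)) := by rw [hc0D2.eq]
      _ = r 1 * ((ascProd r 2 l * descProd r l 2) *
            (r 0 * (r 1 * ascProd r 2 l))) := by group
      _ = r 1 * (1 * (r 0 * (r 1 * ascProd r 2 l))) := by rw [hcan]
      _ = r 1 * (r 0 * (r 1 * ascProd r 2 l)) := by group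
      _ = r 1 * (r 0 * ascProd r 1 l) := by rw [f7]
  -- small step : r0 Dk r1 r0 r1 = rn r0 Dk r1 r0
  have braid0 := h3 0 (by omega)
  have f6 : (r 0 * descProd r n k) * (r 1 * (r 0 * r 1)) =
      r n * ((r 0 * descProd r n k) * (r 1 * r 0)) := by
    calc (r 0 * descProd r n k) * (r 1 * (r 0 * r 1))
        = (r 0 * (r n * descProd r (n - 1) k)) * (r 1 * r 0 * r 1) := by rw [hDk]; group
      _ = (r 0 * (r n * descProd r (n - 1) k)) * (r 0 * r 1 * r 0) := by rw [← braid0]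
      _ = (r 0 * r n) * ((descProd r (n - 1) k * r 0) * (r 1 * r 0)) := by group
      _ = (r 0 * r n) * ((r 0 * descProd r (n - 1) k) * (r 1 * r 0)) := by rw [hc0D'.eq]
      _ = (r 0 * r n * r 0) * (descProd r (n - 1) k * (r 1 * r 0)) := by group
      _ = (r n * r 0 * r n) * (descProd r (n - 1) k * (r 1 * r 0)) := by rw [h4]
      _ = r n * ((r 0 * (r n * descProd r (n - 1) k)) * (r 1 * r 0)) := by group
      _ = r n * ((r 0 * descProd r n k) * (r 1 * r 0)) := by rw [hDk]
  -- main chain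
  calc r 0 * descProd r n k * ascProd r 1 l * r 0 * descProd r n j * ascProd r 1 l
      = (r 0 * descProd r n k) * (ascProd r 1 l * (r 0 *
          ((descProd r n j * (descProd r l 1 * ascProd r 2 l)) * ascProd r 1 (l - 1)))) := by
        nth_rewrite 2 [f1]
        rw [f2]; group
    _ = (r 0 * descProd r n k) * ((ascProd r 1 l * (r 0 *
          (descProd r l 1 * ascProd r 2 l))) * (descProd r n j * ascProd r 1 (l - 1))) := by
        rw [hTDj.eq]; group
    _ = (r 0 * descProd r n k) * ((r 1 * (r 0 * ascProd r 1 l)) *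
          (descProd r n j * ascProd r 1 (l - 1))) := by rw [f4]
    _ = (r 0 * descProd r n k) * ((r 1 * (r 0 * (r 1 * ascProd r 2 l))) *
          (descProd r n j * ascProd r 1 (l - 1))) := by rw [f7]
    _ = ((r 0 * descProd r n k) * (r 1 * (r 0 * r 1))) *
          ((ascProd r 2 l * descProd r n j) * ascProd r 1 (l - 1)) := by group
    _ = (r n * ((r 0 * descProd r n k) * (r 1 * r 0))) *
          ((ascProd r 2 l * descProd r n j) * ascProd r 1 (l - 1)) := by rw [f6]
    _ = r n * ((r 0 * descProd r n k) * ((r 1 * (r 0 * ascProd r 2 l)) *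
          (descProd r n j * ascProd r 1 (l - 1)))) := by group
    _ = r n * ((r 0 * descProd r n k) * ((r 1 * (ascProd r 2 l * r 0)) *
          (descProd r n j * ascProd r 1 (l - 1)))) := by rw [hc0A2.eq]
    _ = r n * (r 0 * descProd r n k * (r 1 * ascProd r 2 l) * r 0 * descProd r n j *
          ascProd r 1 (l - 1)) := by group
    _ = r n * (r 0 * descProd r n k * ascProd r 1 l * r 0 * descProd r n j *
          ascProd r 1 (l - 1)) := by rw [f7]
end
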